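/- Let $K_2, \widehat\beta, K, \lambda, T > 0$ and set $g(t) = K_2(-\widehat\beta/2 + K e^{-\lambda(T-t)})$. Then there exist constants $K', \lambda' > 0$ depending only on $K_2, \widehat\beta, K, \lambda$ (not on $T$ or $t$) such that for all $t \in [0,T]$, $\int_0^t \exp\big(\int_s^t g(r)\,dr\big)\, K e^{-\lambda(T - s)}\, ds \leq K' e^{-\lambda'(T - t)}$. -/

import Mathlib

/-!
Integrating explicitly, `∫_s^t g = -(K₂β̂/2)(t - s) + (K₂K/λ)(e^{-λ(T-t)} - e^{-λ(T-s)})`, and the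
second term is at most `K₂K/λ`. Hence the integrand is at most
`K e^{K₂K/λ} e^{-λ(T-t)} e^{-(K₂β̂/2 + λ)(t-s)}`, and integrating in `s` gives the claim with
`λ' = λ` and `K' = K e^{K₂K/λ} / (K₂β̂/2 + λ)`.
-/
open Real

lemma integral_exp_neg_mul_sub {c : ℝ} (hc : c ≠ 0) (u s t : ℝ) :
    ∫ r in s..t, exp (-c * (u - r)) = (exp (-c * (u - t)) - exp (-c * (u - s))) / c := by
  have h := intervalIntegral.integral_comp_mul_add (fun x => exp x) hc (-c * u) (a := s) (b := t)
  simp only [integral_exp] at h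
  rw [div_eq_inv_mul]
  convert h using 3 <;> ring_nf

lemma integral_exp_neg_mul_sub_le {c : ℝ} (hc : 0 < c) (s t : ℝ) :
    ∫ r in s..t, exp (-c * (t - r)) ≤ 1 / c := by
  rw [integral_exp_neg_mul_sub hc.ne', sub_self, mul_zero, exp_zero]
  gcongr
  linarith [exp_pos (-c * (t - s))]

section

variable {K2 betah K lam T : ℝ}

lemma integral_drift (hlam : lam ≠ 0) (s t : ℝ) :
    ∫ r in s..t, K2 * (-betah / 2 + K * exp (-lam * (T - r))) =
      -(K2 * betah / 2) * (t - s) +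
        K2 * K / lam * (exp (-lam * (T - t)) - exp (-lam * (T - s))) := by
  rw [intervalIntegral.integral_const_mul,
    intervalIntegral.integral_add intervalIntegrable_const
      ((by fun_prop : Continuous fun r => K * exp (-lam * (T - r))).intervalIntegrable _ _),
    intervalIntegral.integral_const, intervalIntegral.integral_const_mul,
    integral_exp_neg_mul_sub hlam]
  field_simp
  ring

lemma exp_drift_mul_le (hK2 : 0 < K2) (hK : 0 < K) (hlam : 0 < lam) {s t : ℝ}
    (htT : t ≤ T) :
    exp (-(K2 * betah / 2) * (t - s) +
        K2 * K / lam * (exp (-lam * (T - t)) - exp (-lam * (T - s)))) *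
        (K * exp (-lam * (T - s))) ≤
      K * exp (K2 * K / lam) * exp (-lam * (T - t)) *
        exp (-(K2 * betah / 2 + lam) * (t - s)) := by
  have hdecay : exp (-lam * (T - t)) ≤ 1 := exp_le_one_iff.mpr (by nlinarith)
  have hc : 0 < K2 * K / lam := by positivity
  rw [mul_left_comm, ← exp_add, mul_assoc, mul_assoc, ← exp_add, ← exp_add]
  refine mul_le_mul_of_nonneg_left (exp_le_exp.mpr ?_) hK.le
  nlinarith [exp_pos (-lam * (T - s))]

end

theorem stmt7 (K2 betah K lam : ℝ) (hK2 : 0 < K2) (hb : 0 < betah) (hK : 0 < K)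
    (hlam : 0 < lam) :
    ∃ K' lam' : ℝ, 0 < K' ∧ 0 < lam' ∧ ∀ T : ℝ, 0 < T → ∀ t ∈ Set.Icc (0 : ℝ) T,
      (∫ s in (0 : ℝ)..t,
          Real.exp (∫ r in s..t, K2 * (-betah / 2 + K * Real.exp (-lam * (T - r)))) *
            (K * Real.exp (-lam * (T - s))))
        ≤ K' * Real.exp (-lam' * (T - t)) := by
  have hrate : 0 < K2 * betah / 2 + lam := by positivity
  refine ⟨K * exp (K2 * K / lam) / (K2 * betah / 2 + lam), lam, by positivity, hlam,
    fun T _ t ⟨ht0, htT⟩ => ?_⟩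
  simp only [integral_drift hlam.ne']
  set C := K * exp (K2 * K / lam) * exp (-lam * (T - t))
  calc _ ≤ ∫ s in 0..t, C * exp (-(K2 * betah / 2 + lam) * (t - s)) :=
        intervalIntegral.integral_mono_on ht0 (Continuous.intervalIntegrable (by fun_prop) _ _)
          (Continuous.intervalIntegrable (by fun_prop) _ _)
          fun s _ => exp_drift_mul_le hK2 hK hlam htT
    _ = C * ∫ s in 0..t, exp (-(K2 * betah / 2 + lam) * (t - s)) :=
        intervalIntegral.integral_const_mul _ _
    _ ≤ C * (1 / (K2 * betah / 2 + lam)) := by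
        gcongr
        exact integral_exp_neg_mul_sub_le hrate 0 t
    _ = _ := by ring
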